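/- Every closed subset of a weakly nilpotent hypergroup is itself a weakly nilpotent hypergroup. -/

import Mathlib

/-- A hypergroup: a set with a hypermultiplication, identity and involution
satisfying (H1), (H2), (H3). -/
structure Hypergroup (H : Type*) where
  hmul : H → H → Set H
  one : H
  star : H → H
  assoc : ∀ p q r : H, (⋃ x ∈ hmul q r, hmul p x) = ⋃ x ∈ hmul p q, hmul x r
  hmul_one : ∀ s : H, hmul s one = {s}
  inv_left : ∀ p q r : H, r ∈ hmul p q → q ∈ hmul (star p) r
  inv_right : ∀ p q r : H, r ∈ hmul p q → p ∈ hmul r (star q)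

namespace Hypergroup

variable {H : Type*} (G : Hypergroup H)

/-- Complex (set) product: `AB = ⋃_{a ∈ A, b ∈ B} ab`. -/
def smul (A B : Set H) : Set H := ⋃ a ∈ A, ⋃ b ∈ B, G.hmul a b

/-- `A* = { a* | a ∈ A }`. -/
def sstar (A : Set H) : Set H := G.star '' A

/-- A nonempty subset `F` is closed if `F*F ⊆ F`. -/
def IsClosed (F : Set H) : Prop := F.Nonempty ∧ G.smul (G.sstar F) F ⊆ F

/-- `F` is normal in `K`: `Fk ⊆ kF` for all `k ∈ K`. -/
def IsNormalIn (F K : Set H) : Prop := ∀ k ∈ K, G.smul F {k} ⊆ G.smul {k} F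

/-- `F` is strongly normal in `K`: `k*Fk ⊆ F` for all `k ∈ K`. -/
def IsStronglyNormalIn (F K : Set H) : Prop :=
  ∀ k ∈ K, G.smul (G.smul {G.star k} F) {k} ⊆ F

/-- An element `s` is thin if `s*s = {1}`. -/
def IsThinElem (s : H) : Prop := G.hmul (G.star s) s = {G.one}

/-- A hypergroup is thin if all elements are thin. -/
def IsThin : Prop := ∀ s : H, G.IsThinElem s

/-- The center `Z(H) = {h | hx = xh for all x, h*h = {1}}`. -/
def center : Set H :=
  {h | (∀ x : H, G.hmul h x = G.hmul x h) ∧ G.hmul (G.star h) h = {G.one}}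

/-- The class `h^F := FhF`. -/
def cls (F : Set H) (h : H) : Set H := G.smul (G.smul F {h}) F

/-- The quotient set `H//F := { h^F | h ∈ H }`. -/
def quotSet (F : Set H) : Set (Set H) := Set.range (G.cls F)

/-- The class `h^F` as an element of `H//F`. -/
def qcls (F : Set H) (h : H) : G.quotSet F := ⟨G.cls F h, h, rfl⟩

/-- The full preimage in `H` of the center of the quotient `H//T`:
`{h | h^T ∈ Z(H//T)}`, i.e. `h^T` commutes with all classes `y^T` and
`(h^T)*(h^T) = {1^T} = {T}`. -/
def qCenterPre (T : Set H) : Set H :=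
  {h | (∀ y : H, G.cls T '' (G.smul (G.smul {h} T) {y}) =
          G.cls T '' (G.smul (G.smul {y} T) {h})) ∧
       G.cls T '' (G.smul (G.smul {G.star h} T) {h}) = {T}}

/-- The upper central series: `Z₀(H) = {1}`, and `Zᵢ₊₁(H)` is the full preimage
of `Z(H//Zᵢ(H))`, i.e. `Zᵢ₊₁(H)//Zᵢ(H) = Z(H//Zᵢ(H))`. -/
def upperCentral : ℕ → Set H
  | 0 => {G.one}
  | n + 1 => G.qCenterPre (upperCentral n)

/-- A hypergroup is weakly nilpotent if `Zₙ(H) = H` for some `n`. -/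
def WeaklyNilpotent : Prop := ∃ n : ℕ, G.upperCentral n = Set.univ

/-- `F` is subnormal in `K` via a chain of successively normal closed subsets. -/
def IsSubnormalIn (F K : Set H) : Prop :=
  ∃ n : ℕ, ∃ C : ℕ → Set H, C 0 = F ∧ C n = K ∧
    ∀ i < n, C i ⊆ C (i + 1) ∧ G.IsClosed (C (i + 1)) ∧ G.IsNormalIn (C i) (C (i + 1))

/-- The quotient `K//N` is thin: `(k^N)*(k^N) = {1^N}` for all `k ∈ K`. -/
def QuotThin (N K : Set H) : Prop :=
  ∀ k ∈ K, G.cls N '' (G.smul (G.smul {G.star k} N) {k}) = {N}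

/-- A residually-thin chain from `{1}` to `K`. -/
def RTChainOn (K : Set H) (n : ℕ) (C : ℕ → Set H) : Prop :=
  C 0 = {G.one} ∧ C n = K ∧
    ∀ i < n, C i ⊆ C (i + 1) ∧ G.IsClosed (C (i + 1)) ∧ G.QuotThin (C i) (C (i + 1))

/-- The valency `n_K = ∏ |Cᵢ₊₁//Cᵢ|` computed along some RT chain for `K`. -/
def HasValencyOn (K : Set H) (m : ℕ) : Prop :=
  ∃ n C, G.RTChainOn K n C ∧
    m = ∏ i ∈ Finset.range n, Nat.card (G.cls (C i) '' C (i + 1))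

/-- A closed `p`-subset: a closed subset whose valency is a power of `p`. -/
def PSubsetOn (p : ℕ) (K : Set H) : Prop :=
  G.IsClosed K ∧ ∃ m k : ℕ, G.HasValencyOn K m ∧ m = p ^ k

/-- `h` is `p`-valenced in `K`: for every subnormal closed `p`-subset `U` of `K`
such that `(h*)^U h^U` consists of thin elements of the quotient,
`n_{(h*)^U h^U} = |(h*)^U h^U|` is a power of `p`. -/
def PValencedElemOn (p : ℕ) (K : Set H) (h : H) : Prop :=
  ∀ U : Set H, G.IsClosed U → U ⊆ K → G.IsSubnormalIn U K → G.PSubsetOn p U →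
    (∀ x ∈ G.smul (G.smul {G.star h} U) {h},
      G.cls U '' (G.smul (G.smul {G.star x} U) {x}) = {U}) →
    ∃ k : ℕ, Nat.card (G.cls U '' (G.smul (G.smul {G.star h} U) {h})) = p ^ k

/-- `K` is `p`-valenced if all its elements are. -/
def PValencedOn (p : ℕ) (K : Set H) : Prop := ∀ h ∈ K, G.PValencedElemOn p K h

end Hypergroup

/-!
For a closed subset `T` with `Tx = xT` for all `x`, the class `h^T = ThT` is the coset `hT`, and
`h^T` lies in `Z(H//T)` exactly when `hyT = yhT` for all `y` and `h*h ⊆ T`. Every `Zᵢ(H)` is such a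
subset, and this coset criterion is monotone in `T`. Now let `F` be closed and `T = Zᵢ(H)`. If
`u ∈ vt` with `u, v ∈ F` and `t ∈ T`, then `t ∈ v*u ⊆ F`; hence `F ∩ T` is again normal in `F`, and
`hyT = yhT` for `h, y ∈ F` gives `hy(F ∩ T) = yh(F ∩ T)`. So `Zᵢ₊₁(H) ∩ F` lies in the preimage of
the center of `F//(F ∩ Zᵢ(H))`, and by induction `Zᵢ(H) ∩ F ⊆ Zᵢ(F)` for all `i`.
-/

namespace Hypergroup

variable {H : Type*} (G : Hypergroup H)

local infixl:70 " ⊙ " => G.smul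

section Elements

lemma self_mem_hmul_one (a : H) : a ∈ G.hmul a G.one := by
  rw [G.hmul_one]; rfl

lemma one_mem_star_hmul (a : H) : G.one ∈ G.hmul (G.star a) a :=
  G.inv_left a G.one a (G.self_mem_hmul_one a)

lemma star_star (a : H) : G.star (G.star a) = a := by
  have h := G.inv_left (G.star a) a G.one (G.one_mem_star_hmul a)
  rw [G.hmul_one] at h
  exact (Set.mem_singleton_iff.1 h).symm

lemma one_mem_hmul_star (a : H) : G.one ∈ G.hmul a (G.star a) := by
  simpa [G.star_star] using G.one_mem_star_hmul (G.star a)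

lemma one_hmul (s : H) : G.hmul G.one s = {s} := by
  ext x
  constructor
  · intro hx
    have h := G.inv_left x (G.star s) G.one (G.inv_right G.one s x hx)
    rw [G.hmul_one] at h
    simpa [G.star_star] using (congrArg G.star h).symm
  · rintro rfl
    simpa [G.star_star] using G.inv_right x (G.star x) G.one (G.one_mem_hmul_star x)

lemma star_one : G.star G.one = G.one := by
  have h := G.one_mem_star_hmul G.one
  rw [G.hmul_one] at h
  exact (Set.mem_singleton_iff.1 h).symm

lemma star_mem_hmul_star {p q r : H} (h : r ∈ G.hmul p q) :
    G.star r ∈ G.hmul (G.star q) (G.star p) :=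
  G.inv_right _ _ _ (G.inv_left r (G.star q) p (G.inv_right p q r h))

lemma hmul_nonempty (p q : H) : (G.hmul p q).Nonempty := by
  have hp : p ∈ ⋃ x ∈ G.hmul q (G.star q), G.hmul p x :=
    Set.mem_biUnion (G.one_mem_hmul_star q) (G.self_mem_hmul_one p)
  rw [G.assoc] at hp
  obtain ⟨x, hx, -⟩ := Set.mem_iUnion₂.1 hp
  exact ⟨x, hx⟩

end Elements

section SetProduct

lemma mem_smul {A B : Set H} {x : H} :
    x ∈ A ⊙ B ↔ ∃ a ∈ A, ∃ b ∈ B, x ∈ G.hmul a b := by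
  simp [Hypergroup.smul]

lemma smul_assoc (A B C : Set H) : A ⊙ B ⊙ C = A ⊙ (B ⊙ C) := by
  have hassoc (a b c x : H) :
      (∃ y ∈ G.hmul a b, x ∈ G.hmul y c) ↔ ∃ z ∈ G.hmul b c, x ∈ G.hmul a z := by
    simpa using (Set.ext_iff.1 (G.assoc a b c) x).symm
  ext x
  simp only [G.mem_smul]
  constructor
  · rintro ⟨y, ⟨a, ha, b, hb, hy⟩, c, hc, hx⟩
    obtain ⟨z, hz, hxz⟩ := (hassoc a b c x).1 ⟨y, hy, hx⟩
    exact ⟨a, ha, z, ⟨b, hb, c, hc, hz⟩, hxz⟩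
  · rintro ⟨a, ha, z, ⟨b, hb, c, hc, hz⟩, hx⟩
    obtain ⟨y, hy, hxy⟩ := (hassoc a b c x).2 ⟨z, hz, hx⟩
    exact ⟨y, ⟨a, ha, b, hb, hy⟩, c, hc, hxy⟩

lemma singleton_smul_singleton (a b : H) : {a} ⊙ {b} = G.hmul a b := by
  ext x; simp [G.mem_smul]

lemma smul_mono {A A' B B' : Set H} (hA : A ⊆ A') (hB : B ⊆ B') : A ⊙ B ⊆ A' ⊙ B' := by
  intro x hx
  obtain ⟨a, ha, b, hb, hab⟩ := G.mem_smul.1 hx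
  exact G.mem_smul.2 ⟨a, hA ha, b, hB hb, hab⟩

lemma subset_smul_of_one_mem_left {T : Set H} (h1 : G.one ∈ T) (A : Set H) : A ⊆ T ⊙ A :=
  fun a ha => G.mem_smul.2 ⟨G.one, h1, a, ha, by rw [G.one_hmul]; rfl⟩

lemma subset_smul_of_one_mem_right {T : Set H} (h1 : G.one ∈ T) (A : Set H) : A ⊆ A ⊙ T :=
  fun a ha => G.mem_smul.2 ⟨a, ha, G.one, h1, G.self_mem_hmul_one a⟩

lemma sstar_smul (A B : Set H) : G.sstar (A ⊙ B) = G.sstar B ⊙ G.sstar A := by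
  ext z
  constructor
  · rintro ⟨w, hw, rfl⟩
    obtain ⟨a, ha, b, hb, hab⟩ := G.mem_smul.1 hw
    exact G.mem_smul.2 ⟨_, ⟨b, hb, rfl⟩, _, ⟨a, ha, rfl⟩, G.star_mem_hmul_star hab⟩
  · intro hz
    obtain ⟨-, ⟨b, hb, rfl⟩, -, ⟨a, ha, rfl⟩, hab⟩ := G.mem_smul.1 hz
    refine ⟨G.star z, ?_, G.star_star z⟩
    have := G.star_mem_hmul_star hab
    rw [G.star_star, G.star_star] at this
    exact G.mem_smul.2 ⟨a, ha, b, hb, this⟩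

lemma sstar_singleton (a : H) : G.sstar {a} = {G.star a} := Set.image_singleton

lemma sstar_sstar (A : Set H) : G.sstar (G.sstar A) = A := by
  simp [sstar, Set.image_image, G.star_star]

end SetProduct

section Closed

variable {G} {T : Set H}

lemma IsClosed.one_mem (hT : G.IsClosed T) : G.one ∈ T := by
  obtain ⟨a, ha⟩ := hT.1
  exact hT.2 (G.mem_smul.2 ⟨G.star a, ⟨a, ha, rfl⟩, a, ha, G.one_mem_star_hmul a⟩)

lemma IsClosed.star_mem (hT : G.IsClosed T) {t : H} (ht : t ∈ T) : G.star t ∈ T :=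
  hT.2 (G.mem_smul.2 ⟨G.star t, ⟨t, ht, rfl⟩, G.one, hT.one_mem, G.self_mem_hmul_one _⟩)

lemma IsClosed.sstar_eq (hT : G.IsClosed T) : G.sstar T = T := by
  refine Set.Subset.antisymm (Set.image_subset_iff.2 fun t ht => hT.star_mem ht) fun x hx => ?_
  exact ⟨G.star x, hT.star_mem hx, G.star_star x⟩

lemma IsClosed.smul_subset (hT : G.IsClosed T) {A B : Set H} (hA : A ⊆ T) (hB : B ⊆ T) :
    A ⊙ B ⊆ T := by
  have h := hT.2
  rw [hT.sstar_eq] at h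
  exact (G.smul_mono hA hB).trans h

lemma IsClosed.hmul_subset (hT : G.IsClosed T) {a b : H} (ha : a ∈ T) (hb : b ∈ T) :
    G.hmul a b ⊆ T := by
  rw [← G.singleton_smul_singleton]
  exact hT.smul_subset (Set.singleton_subset_iff.2 ha) (Set.singleton_subset_iff.2 hb)

lemma IsClosed.smul_self (hT : G.IsClosed T) : T ⊙ T = T :=
  (hT.smul_subset le_rfl le_rfl).antisymm (G.subset_smul_of_one_mem_right hT.one_mem T)

lemma IsClosed.smul_smul_self_left (hT : G.IsClosed T) (A : Set H) :
    T ⊙ (T ⊙ A) = T ⊙ A := by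
  rw [← G.smul_assoc, hT.smul_self]

lemma IsClosed.smul_smul_self_right (hT : G.IsClosed T) (A : Set H) :
    A ⊙ T ⊙ T = A ⊙ T := by
  rw [G.smul_assoc, hT.smul_self]

lemma IsClosed.smul_eq_right_of_subset {S : Set H} (hS : G.IsClosed S) (hT : G.IsClosed T)
    (hST : S ⊆ T) : S ⊙ T = T :=
  (hT.smul_subset hST le_rfl).antisymm (G.subset_smul_of_one_mem_left hS.one_mem T)

lemma IsClosed.smul_subset_iff (hT : G.IsClosed T) {A : Set H} : A ⊙ T ⊆ T ↔ A ⊆ T :=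
  ⟨fun h => (G.subset_smul_of_one_mem_right hT.one_mem A).trans h,
    fun h => hT.smul_subset h le_rfl⟩

lemma IsClosed.inter {S : Set H} (hS : G.IsClosed S) (hT : G.IsClosed T) :
    G.IsClosed (S ∩ T) := by
  refine ⟨⟨G.one, hS.one_mem, hT.one_mem⟩, fun z hz => ⟨?_, ?_⟩⟩
  · exact hS.2 (G.smul_mono (Set.image_mono Set.inter_subset_left) Set.inter_subset_left hz)
  · exact hT.2 (G.smul_mono (Set.image_mono Set.inter_subset_right) Set.inter_subset_right hz)

lemma isClosed_singleton_one : G.IsClosed {G.one} := by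
  refine ⟨Set.singleton_nonempty _, fun z hz => ?_⟩
  obtain ⟨-, ⟨-, rfl, rfl⟩, -, rfl, hz⟩ := G.mem_smul.1 hz
  rwa [G.star_one, G.one_hmul] at hz

end Closed

section Classes

variable {G} {T : Set H}

lemma smul_smul_eq_biUnion_cls (A : Set H) : T ⊙ A ⊙ T = ⋃ a ∈ A, G.cls T a := by
  ext z
  simp only [cls, G.mem_smul, Set.mem_iUnion, Set.mem_singleton_iff, exists_prop]
  constructor
  · rintro ⟨w, ⟨t, ht, a, ha, hw⟩, t', ht', hz⟩
    exact ⟨a, ha, w, ⟨t, ht, a, rfl, hw⟩, t', ht', hz⟩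
  · rintro ⟨a, ha, w, ⟨t, ht, a, rfl, hw⟩, t', ht', hz⟩
    exact ⟨w, ⟨t, ht, a, ha, hw⟩, t', ht', hz⟩

lemma IsClosed.mem_cls_self (hT : G.IsClosed T) (x : H) : x ∈ G.cls T x :=
  G.subset_smul_of_one_mem_right hT.one_mem _
    (G.subset_smul_of_one_mem_left hT.one_mem _ rfl)

lemma IsClosed.mem_cls_comm (hT : G.IsClosed T) {x y : H} (h : x ∈ G.cls T y) :
    y ∈ G.cls T x := by
  obtain ⟨w, hw, t₂, ht₂, hx⟩ := G.mem_smul.1 h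
  obtain ⟨t₁, ht₁, y, rfl, hyw⟩ := G.mem_smul.1 hw
  have hw' : w ∈ G.hmul x (G.star t₂) := G.inv_right w t₂ x hx
  have hy : y ∈ G.sstar T ⊙ {w} :=
    G.mem_smul.2 ⟨_, ⟨t₁, ht₁, rfl⟩, w, rfl, G.inv_left _ _ _ hyw⟩
  have hw'' : {w} ⊆ {x} ⊙ G.sstar T :=
    Set.singleton_subset_iff.2 (G.mem_smul.2 ⟨x, rfl, _, ⟨t₂, ht₂, rfl⟩, hw'⟩)
  rw [hT.sstar_eq] at hy hw''
  have := G.smul_mono (le_refl T) hw'' hy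
  rwa [← G.smul_assoc] at this

lemma IsClosed.cls_subset_of_mem (hT : G.IsClosed T) {x y : H} (h : x ∈ G.cls T y) :
    G.cls T x ⊆ G.cls T y := by
  calc G.cls T x ⊆ T ⊙ G.cls T y ⊙ T :=
        G.smul_mono (G.smul_mono le_rfl (Set.singleton_subset_iff.2 h)) le_rfl
    _ = G.cls T y := by simp only [cls, G.smul_assoc, hT.smul_self, hT.smul_smul_self_left]

lemma IsClosed.cls_eq_of_mem (hT : G.IsClosed T) {x y : H} (h : x ∈ G.cls T y) :
    G.cls T x = G.cls T y :=
  (hT.cls_subset_of_mem h).antisymm (hT.cls_subset_of_mem (hT.mem_cls_comm h))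

lemma IsClosed.cls_of_mem (hT : G.IsClosed T) {t : H} (ht : t ∈ T) : G.cls T t = T := by
  have hsub : G.cls T t ⊆ T :=
    hT.smul_subset (hT.smul_subset le_rfl (Set.singleton_subset_iff.2 ht)) le_rfl
  refine hsub.antisymm fun s hs => ?_
  obtain ⟨q, hq⟩ := G.hmul_nonempty s (G.star t)
  have hs' : s ∈ G.hmul q t := by simpa [G.star_star] using G.inv_right s (G.star t) q hq
  exact G.subset_smul_of_one_mem_right hT.one_mem _
    (G.mem_smul.2 ⟨q, hT.hmul_subset hs (hT.star_mem ht) hq, t, rfl, hs'⟩)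

lemma IsClosed.image_cls_eq_iff (hT : G.IsClosed T) {A B : Set H} :
    G.cls T '' A = G.cls T '' B ↔ T ⊙ A ⊙ T = T ⊙ B ⊙ T := by
  have key {A B : Set H} (h : T ⊙ A ⊙ T = T ⊙ B ⊙ T) : G.cls T '' A ⊆ G.cls T '' B := by
    rintro - ⟨a, ha, rfl⟩
    have : a ∈ T ⊙ B ⊙ T :=
      h ▸ G.subset_smul_of_one_mem_right hT.one_mem _
        (G.subset_smul_of_one_mem_left hT.one_mem _ ha)
    rw [smul_smul_eq_biUnion_cls, Set.mem_iUnion₂] at this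
    obtain ⟨b, hb, hab⟩ := this
    exact ⟨b, hb, (hT.cls_eq_of_mem hab).symm⟩
  refine ⟨fun h => ?_, fun h => (key h).antisymm (key h.symm)⟩
  rw [smul_smul_eq_biUnion_cls, smul_smul_eq_biUnion_cls, ← Set.sUnion_image,
    ← Set.sUnion_image, h]

lemma IsClosed.image_cls_eq_singleton_iff (hT : G.IsClosed T) {A : Set H} :
    G.cls T '' A = {T} ↔ A.Nonempty ∧ A ⊆ T := by
  constructor
  · intro h
    refine ⟨Set.image_nonempty.1 (h ▸ Set.singleton_nonempty T), fun a ha => ?_⟩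
    have hcls : G.cls T a = T := h.subset ⟨a, ha, rfl⟩
    exact hcls ▸ hT.mem_cls_self a
  · rintro ⟨hne, hA⟩
    rw [Set.image_congr fun a ha => hT.cls_of_mem (hA ha), hne.image_const]

end Classes

section CenterPreimage

variable {G} {T : Set H}

lemma IsClosed.mem_qCenterPre_iff (hT : G.IsClosed T) {h : H} :
    h ∈ G.qCenterPre T ↔
      (∀ y, T ⊙ ({h} ⊙ T ⊙ {y}) ⊙ T = T ⊙ ({y} ⊙ T ⊙ {h}) ⊙ T) ∧
        {G.star h} ⊙ T ⊙ {h} ⊆ T := by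
  have hne : ({G.star h} ⊙ T ⊙ {h}).Nonempty := by
    obtain ⟨x, hx⟩ := G.hmul_nonempty (G.star h) h
    exact ⟨x, G.mem_smul.2 ⟨_, G.subset_smul_of_one_mem_right hT.one_mem _ rfl, h, rfl, hx⟩⟩
  simp only [qCenterPre, Set.mem_ofPred_eq, hT.image_cls_eq_iff, hT.image_cls_eq_singleton_iff,
    and_iff_right hne]

lemma IsClosed.smul_comm_of_isNormalIn (hT : G.IsClosed T) (hN : G.IsNormalIn T Set.univ)
    (A : Set H) : T ⊙ A = A ⊙ T := by
  have hsub (A : Set H) : T ⊙ A ⊆ A ⊙ T := fun z hz => by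
    obtain ⟨t, ht, a, ha, hz⟩ := G.mem_smul.1 hz
    exact G.smul_mono (Set.singleton_subset_iff.2 ha) le_rfl
      (hN a trivial (G.mem_smul.2 ⟨t, ht, a, rfl, hz⟩))
  refine (hsub A).antisymm ?_
  have h : G.sstar (T ⊙ G.sstar A) ⊆ G.sstar (G.sstar A ⊙ T) := Set.image_mono (hsub _)
  rwa [G.sstar_smul, G.sstar_smul, G.sstar_sstar, hT.sstar_eq] at h

lemma IsClosed.smul_smul_eq_of_isNormalIn (hT : G.IsClosed T) (hN : G.IsNormalIn T Set.univ)
    (A : Set H) : T ⊙ A ⊙ T = A ⊙ T := by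
  rw [hT.smul_comm_of_isNormalIn hN, hT.smul_smul_self_right]

lemma IsClosed.singleton_smul_smul_singleton (hT : G.IsClosed T)
    (hN : G.IsNormalIn T Set.univ) (a b : H) : {a} ⊙ T ⊙ {b} = G.hmul a b ⊙ T := by
  rw [G.smul_assoc, hT.smul_comm_of_isNormalIn hN, ← G.smul_assoc, G.singleton_smul_singleton]

lemma IsClosed.coset_smul_coset (hT : G.IsClosed T) (hN : G.IsNormalIn T Set.univ)
    (A B : Set H) : A ⊙ T ⊙ (B ⊙ T) = A ⊙ B ⊙ T := by
  rw [← hT.smul_comm_of_isNormalIn hN B, G.smul_assoc, hT.smul_smul_self_left,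
    hT.smul_comm_of_isNormalIn hN B, G.smul_assoc]

lemma IsClosed.singleton_smul_eq_of_mem (hT : G.IsClosed T) (hN : G.IsNormalIn T Set.univ)
    {t : H} (ht : t ∈ T) : {t} ⊙ T = T := by
  rw [← hT.smul_smul_eq_of_isNormalIn hN, ← cls, hT.cls_of_mem ht]

lemma IsClosed.mem_qCenterPre_iff_of_isNormalIn (hT : G.IsClosed T)
    (hN : G.IsNormalIn T Set.univ) {h : H} :
    h ∈ G.qCenterPre T ↔
      (∀ y, G.hmul h y ⊙ T = G.hmul y h ⊙ T) ∧ G.hmul (G.star h) h ⊆ T := by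
  simp only [hT.mem_qCenterPre_iff, hT.singleton_smul_smul_singleton hN,
    hT.smul_smul_eq_of_isNormalIn hN, hT.smul_smul_self_right, hT.smul_subset_iff]

lemma IsClosed.coset_comm_of_mem_qCenterPre (hT : G.IsClosed T)
    (hN : G.IsNormalIn T Set.univ) {h : H} (hh : h ∈ G.qCenterPre T) (y : H) :
    {h} ⊙ T ⊙ ({y} ⊙ T) = {y} ⊙ T ⊙ ({h} ⊙ T) := by
  rw [hT.coset_smul_coset hN, hT.coset_smul_coset hN, G.singleton_smul_singleton,
    G.singleton_smul_singleton]
  exact ((hT.mem_qCenterPre_iff_of_isNormalIn hN).1 hh).1 y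

lemma IsClosed.hmul_star_subset_of_mem_qCenterPre (hT : G.IsClosed T)
    (hN : G.IsNormalIn T Set.univ) {h : H} (hh : h ∈ G.qCenterPre T) :
    G.hmul h (G.star h) ⊆ T := by
  obtain ⟨hcomm, hthin⟩ := (hT.mem_qCenterPre_iff_of_isNormalIn hN).1 hh
  calc G.hmul h (G.star h) ⊆ G.hmul h (G.star h) ⊙ T :=
        G.subset_smul_of_one_mem_right hT.one_mem _
    _ = G.hmul (G.star h) h ⊙ T := hcomm _
    _ ⊆ T := hT.smul_subset_iff.2 hthin

lemma IsClosed.subset_qCenterPre (hT : G.IsClosed T) (hN : G.IsNormalIn T Set.univ) :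
    T ⊆ G.qCenterPre T := by
  intro t ht
  refine (hT.mem_qCenterPre_iff_of_isNormalIn hN).2
    ⟨fun y => ?_, hT.hmul_subset (hT.star_mem ht) ht⟩
  rw [← G.singleton_smul_singleton, ← G.singleton_smul_singleton, ← hT.coset_smul_coset hN,
    ← hT.coset_smul_coset hN, hT.singleton_smul_eq_of_mem hN ht, hT.smul_smul_self_right,
    ← hT.smul_comm_of_isNormalIn hN, hT.smul_smul_self_left]

lemma IsClosed.star_mem_qCenterPre (hT : G.IsClosed T) (hN : G.IsNormalIn T Set.univ) {h : H}
    (hh : h ∈ G.qCenterPre T) : G.star h ∈ G.qCenterPre T := by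
  refine (hT.mem_qCenterPre_iff_of_isNormalIn hN).2 ⟨fun y => ?_, ?_⟩
  · have h := congrArg G.sstar (((hT.mem_qCenterPre_iff_of_isNormalIn hN).1 hh).1 (G.star y))
    simp only [← G.singleton_smul_singleton, G.sstar_smul, G.sstar_singleton, G.star_star,
      hT.sstar_eq] at h
    rw [← G.singleton_smul_singleton, ← G.singleton_smul_singleton,
      ← hT.smul_comm_of_isNormalIn hN, ← hT.smul_comm_of_isNormalIn hN]
    exact h.symm
  · rw [G.star_star]
    exact hT.hmul_star_subset_of_mem_qCenterPre hN hh

lemma IsClosed.coset_eq_of_mem_hmul (hT : G.IsClosed T) (hN : G.IsNormalIn T Set.univ)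
    {a b z : H} (ha : G.hmul a (G.star a) ⊆ T) (hz : z ∈ G.hmul a b) :
    {z} ⊙ T = {a} ⊙ T ⊙ ({b} ⊙ T) := by
  rw [hT.coset_smul_coset hN, G.singleton_smul_singleton]
  refine (G.smul_mono (Set.singleton_subset_iff.2 hz) le_rfl).antisymm ?_
  suffices hsub : G.hmul a b ⊆ {z} ⊙ T by
    simpa only [hT.smul_smul_self_right] using G.smul_mono hsub (le_refl T)
  intro w hw
  have hw' : w ∈ G.hmul a (G.star a) ⊙ {z} := by
    rw [← G.singleton_smul_singleton, G.smul_assoc, G.singleton_smul_singleton (G.star a)]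
    exact G.mem_smul.2 ⟨a, rfl, b, G.inv_left a b z hz, hw⟩
  rw [← hT.smul_comm_of_isNormalIn hN]
  exact G.smul_mono ha le_rfl hw'

lemma IsClosed.mem_qCenterPre_of_mem_hmul (hT : G.IsClosed T) (hN : G.IsNormalIn T Set.univ)
    {a b z : H} (ha : a ∈ G.qCenterPre T) (hb : b ∈ G.qCenterPre T) (hz : z ∈ G.hmul a b) :
    z ∈ G.qCenterPre T := by
  have hza := hT.coset_eq_of_mem_hmul hN (hT.hmul_star_subset_of_mem_qCenterPre hN ha) hz
  refine (hT.mem_qCenterPre_iff_of_isNormalIn hN).2 ⟨fun y => ?_, ?_⟩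
  · rw [← G.singleton_smul_singleton, ← G.singleton_smul_singleton, ← hT.coset_smul_coset hN,
      ← hT.coset_smul_coset hN, hza, G.smul_assoc, hT.coset_comm_of_mem_qCenterPre hN hb,
      ← G.smul_assoc, hT.coset_comm_of_mem_qCenterPre hN ha, G.smul_assoc]
  · have hthin (c : H) (hc : c ∈ G.qCenterPre T) : G.hmul (G.star c) c ⊆ T :=
      ((hT.mem_qCenterPre_iff_of_isNormalIn hN).1 hc).2
    calc G.hmul (G.star z) z
        ⊆ {G.star b} ⊙ {G.star a} ⊙ ({a} ⊙ {b}) := by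
          rw [G.singleton_smul_singleton, G.singleton_smul_singleton, ← G.singleton_smul_singleton]
          exact G.smul_mono (Set.singleton_subset_iff.2 (G.star_mem_hmul_star hz))
            (Set.singleton_subset_iff.2 hz)
      _ = {G.star b} ⊙ ({G.star a} ⊙ {a}) ⊙ {b} := by simp only [G.smul_assoc]
      _ ⊆ {G.star b} ⊙ T ⊙ {b} := by
          rw [G.singleton_smul_singleton (G.star a)]
          exact G.smul_mono (G.smul_mono le_rfl (hthin a ha)) le_rfl
      _ = G.hmul (G.star b) b ⊙ T := hT.singleton_smul_smul_singleton hN _ _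
      _ ⊆ T := hT.smul_subset_iff.2 (hthin b hb)

lemma IsClosed.isClosed_qCenterPre (hT : G.IsClosed T) (hN : G.IsNormalIn T Set.univ) :
    G.IsClosed (G.qCenterPre T) := by
  refine ⟨⟨G.one, hT.subset_qCenterPre hN hT.one_mem⟩, fun z hz => ?_⟩
  obtain ⟨-, ⟨a, ha, rfl⟩, b, hb, hz⟩ := G.mem_smul.1 hz
  exact hT.mem_qCenterPre_of_mem_hmul hN (hT.star_mem_qCenterPre hN ha) hb hz

lemma IsClosed.isNormalIn_qCenterPre (hT : G.IsClosed T) (hN : G.IsNormalIn T Set.univ) :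
    G.IsNormalIn (G.qCenterPre T) Set.univ := by
  intro x _ z hz
  obtain ⟨a, ha, x, rfl, hax⟩ := G.mem_smul.1 hz
  have hz' : z ∈ {x} ⊙ ({a} ⊙ T) := by
    rw [← G.smul_assoc, G.singleton_smul_singleton,
      ← ((hT.mem_qCenterPre_iff_of_isNormalIn hN).1 ha).1 x]
    exact G.subset_smul_of_one_mem_right hT.one_mem _ hax
  exact G.smul_mono le_rfl ((hT.isClosed_qCenterPre hN).smul_subset
    (Set.singleton_subset_iff.2 ha) (hT.subset_qCenterPre hN)) hz'

lemma qCenterPre_mono {S : Set H} (hS : G.IsClosed S) (hSN : G.IsNormalIn S Set.univ)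
    (hT : G.IsClosed T) (hTN : G.IsNormalIn T Set.univ) (hST : S ⊆ T) :
    G.qCenterPre S ⊆ G.qCenterPre T := by
  intro h hh
  obtain ⟨hcomm, hthin⟩ := (hS.mem_qCenterPre_iff_of_isNormalIn hSN).1 hh
  refine (hT.mem_qCenterPre_iff_of_isNormalIn hTN).2 ⟨fun y => ?_, hthin.trans hST⟩
  rw [← hS.smul_eq_right_of_subset hT hST, ← G.smul_assoc, hcomm, G.smul_assoc]

end CenterPreimage

lemma isClosed_upperCentral_and_isNormalIn (n : ℕ) :
    G.IsClosed (G.upperCentral n) ∧ G.IsNormalIn (G.upperCentral n) Set.univ := by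
  induction n with
  | zero =>
    refine ⟨G.isClosed_singleton_one, fun x _ => ?_⟩
    change {G.one} ⊙ {x} ⊆ {x} ⊙ {G.one}
    rw [G.singleton_smul_singleton, G.singleton_smul_singleton, G.one_hmul, G.hmul_one]
  | succ n ih => exact ⟨ih.1.isClosed_qCenterPre ih.2, ih.1.isNormalIn_qCenterPre ih.2⟩

section Intersection

variable {G} {F Z : Set H}

lemma IsClosed.subset_smul_inter (hF : G.IsClosed F) {X Y : Set H} (hX : X ⊆ F) (hY : Y ⊆ F)
    (h : X ⊆ Y ⊙ Z) : X ⊆ Y ⊙ (F ∩ Z) := by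
  intro x hx
  obtain ⟨y, hy, z, hz, hxyz⟩ := G.mem_smul.1 (h hx)
  have hzF : z ∈ F := hF.hmul_subset (hF.star_mem (hY hy)) (hX hx) (G.inv_left y z x hxyz)
  exact G.mem_smul.2 ⟨y, hy, z, ⟨hzF, hz⟩, hxyz⟩

lemma IsClosed.smul_inter_eq_of_smul_eq (hF : G.IsClosed F) (hZ : G.IsClosed Z) {A B : Set H}
    (hA : A ⊆ F) (hB : B ⊆ F) (h : A ⊙ Z = B ⊙ Z) : A ⊙ (F ∩ Z) = B ⊙ (F ∩ Z) := by
  have hsub {A B : Set H} (hA : A ⊆ F) (hB : B ⊆ F) (h : A ⊙ Z = B ⊙ Z) :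
      A ⊙ (F ∩ Z) ⊆ B ⊙ (F ∩ Z) := by
    have hAB : A ⊆ B ⊙ (F ∩ Z) :=
      hF.subset_smul_inter hA hB (h ▸ G.subset_smul_of_one_mem_right hZ.one_mem A)
    simpa only [(hF.inter hZ).smul_smul_self_right] using G.smul_mono hAB (le_refl (F ∩ Z))
  exact (hsub hA hB h).antisymm (hsub hB hA h.symm)

lemma IsClosed.inter_smul_subset_smul_inter (hF : G.IsClosed F) (hZ : G.IsClosed Z)
    (hZN : G.IsNormalIn Z Set.univ) {x : H} (hx : x ∈ F) :
    (F ∩ Z) ⊙ {x} ⊆ {x} ⊙ (F ∩ Z) := by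
  refine hF.subset_smul_inter (hF.smul_subset Set.inter_subset_left
    (Set.singleton_subset_iff.2 hx)) (Set.singleton_subset_iff.2 hx) ?_
  rw [← hZ.smul_comm_of_isNormalIn hZN]
  exact G.smul_mono Set.inter_subset_right le_rfl

end Intersection

section Induced

variable {G} {F : Set H} {GF : Hypergroup F}

lemma image_val_hmul (hF : G.IsClosed F)
    (hmul : ∀ a b : F, GF.hmul a b = {x : F | (x : H) ∈ G.hmul a b}) (a b : F) :
    Subtype.val '' GF.hmul a b = G.hmul a b := by
  rw [hmul]
  ext x
  exact ⟨fun ⟨y, hy, hyx⟩ => hyx ▸ hy, fun hx => ⟨⟨x, hF.hmul_subset a.2 b.2 hx⟩, hx, rfl⟩⟩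

lemma image_val_smul (hF : G.IsClosed F)
    (hmul : ∀ a b : F, GF.hmul a b = {x : F | (x : H) ∈ G.hmul a b}) (A B : Set F) :
    Subtype.val '' GF.smul A B = Subtype.val '' A ⊙ Subtype.val '' B := by
  simp only [smul, Set.image_iUnion₂, image_val_hmul hF hmul, Set.biUnion_image]

lemma val_one (hF : G.IsClosed F)
    (hmul : ∀ a b : F, GF.hmul a b = {x : F | (x : H) ∈ G.hmul a b}) :
    (GF.one : H) = G.one := by
  have h : (⟨G.one, hF.one_mem⟩ : F) ∈ GF.hmul ⟨G.one, hF.one_mem⟩ GF.one := by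
    rw [GF.hmul_one]; rfl
  rw [hmul] at h
  change G.one ∈ G.hmul G.one GF.one at h
  rw [G.one_hmul] at h
  exact h.symm

lemma val_star (hF : G.IsClosed F)
    (hmul : ∀ a b : F, GF.hmul a b = {x : F | (x : H) ∈ G.hmul a b}) (a : F) :
    (GF.star a : H) = G.star a := by
  have h := GF.one_mem_star_hmul a
  rw [hmul] at h
  change (GF.one : H) ∈ G.hmul (GF.star a) a at h
  rw [val_one hF hmul] at h
  have := G.inv_right _ _ _ h
  rwa [G.one_hmul] at this

lemma image_val_sstar (hF : G.IsClosed F)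
    (hmul : ∀ a b : F, GF.hmul a b = {x : F | (x : H) ∈ G.hmul a b}) (A : Set F) :
    Subtype.val '' GF.sstar A = G.sstar (Subtype.val '' A) := by
  simp only [sstar, Set.image_image, val_star hF hmul]

variable {Z : Set H}

lemma isClosed_preimage_val (hF : G.IsClosed F)
    (hmul : ∀ a b : F, GF.hmul a b = {x : F | (x : H) ∈ G.hmul a b}) (hZ : G.IsClosed Z) :
    GF.IsClosed (Subtype.val ⁻¹' Z) := by
  refine ⟨⟨⟨G.one, hF.one_mem⟩, hZ.one_mem⟩, fun z hz => ?_⟩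
  have := Set.mem_image_of_mem Subtype.val hz
  rw [image_val_smul hF hmul, image_val_sstar hF hmul, Subtype.image_preimage_coe] at this
  exact ((hF.inter hZ).2 this).2

lemma isNormalIn_preimage_val (hF : G.IsClosed F)
    (hmul : ∀ a b : F, GF.hmul a b = {x : F | (x : H) ∈ G.hmul a b}) (hZ : G.IsClosed Z)
    (hZN : G.IsNormalIn Z Set.univ) : GF.IsNormalIn (Subtype.val ⁻¹' Z) Set.univ := by
  intro x _
  rw [← Set.image_subset_image_iff Subtype.val_injective, image_val_smul hF hmul,
    image_val_smul hF hmul, Set.image_singleton, Subtype.image_preimage_coe]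
  exact hF.inter_smul_subset_smul_inter hZ hZN x.2

lemma mem_qCenterPre_preimage_val (hF : G.IsClosed F)
    (hmul : ∀ a b : F, GF.hmul a b = {x : F | (x : H) ∈ G.hmul a b}) (hZ : G.IsClosed Z)
    (hZN : G.IsNormalIn Z Set.univ) {h : F} (hh : (h : H) ∈ G.qCenterPre Z) :
    h ∈ GF.qCenterPre (Subtype.val ⁻¹' Z) := by
  obtain ⟨hcomm, hthin⟩ := (hZ.mem_qCenterPre_iff_of_isNormalIn hZN).1 hh
  rw [(isClosed_preimage_val hF hmul hZ).mem_qCenterPre_iff_of_isNormalIn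
    (isNormalIn_preimage_val hF hmul hZ hZN)]
  refine ⟨fun y => Set.image_injective.2 Subtype.val_injective ?_, fun x hx => ?_⟩
  · rw [image_val_smul hF hmul, image_val_smul hF hmul, image_val_hmul hF hmul,
      image_val_hmul hF hmul, Subtype.image_preimage_coe]
    exact hF.smul_inter_eq_of_smul_eq hZ (hF.hmul_subset h.2 y.2) (hF.hmul_subset y.2 h.2)
      (hcomm y)
  · rw [hmul] at hx
    change (x : H) ∈ G.hmul (GF.star h) h at hx
    rw [val_star hF hmul] at hx
    exact hthin hx

lemma preimage_val_upperCentral_subset (hF : G.IsClosed F)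
    (hmul : ∀ a b : F, GF.hmul a b = {x : F | (x : H) ∈ G.hmul a b}) (n : ℕ) :
    Subtype.val ⁻¹' G.upperCentral n ⊆ GF.upperCentral n := by
  induction n with
  | zero => exact fun h hh => Subtype.ext (hh.trans (val_one hF hmul).symm)
  | succ n ih =>
    obtain ⟨hZ, hZN⟩ := G.isClosed_upperCentral_and_isNormalIn n
    obtain ⟨hZ', hZN'⟩ := GF.isClosed_upperCentral_and_isNormalIn n
    exact fun h hh => GF.qCenterPre_mono (isClosed_preimage_val hF hmul hZ)
      (isNormalIn_preimage_val hF hmul hZ hZN) hZ' hZN' ih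
      (mem_qCenterPre_preimage_val hF hmul hZ hZN hh)

end Induced

end Hypergroup

theorem closed_subset_weaklyNilpotent_general {H : Type*} (G : Hypergroup H) (F : Set H)
    (hF : G.IsClosed F) (GF : Hypergroup F)
    (hmul : ∀ a b : F, GF.hmul a b = {x : F | (x : H) ∈ G.hmul a b})
    (hG : G.WeaklyNilpotent) :
    GF.WeaklyNilpotent := by
  obtain ⟨n, hn⟩ := hG
  refine ⟨n, Set.eq_univ_of_forall fun h => ?_⟩
  exact Hypergroup.preimage_val_upperCentral_subset hF hmul n (by simp [hn])

/-- every closed subset of a weakly nilpotent hypergroup is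
itself a weakly nilpotent hypergroup (w.r.t. the induced structure). -/
theorem closed_subset_weaklyNilpotent {H : Type*} (G : Hypergroup H) (F : Set H)
    (hF : G.IsClosed F) (GF : Hypergroup F)
    (hmul : ∀ a b : F, GF.hmul a b = {x : F | (x : H) ∈ G.hmul a b})
    (hone : (GF.one : H) = G.one)
    (hstar : ∀ a : F, (GF.star a : H) = G.star a)
    (hG : G.WeaklyNilpotent) :
    GF.WeaklyNilpotent :=
  closed_subset_weaklyNilpotent_general G F hF GF hmul hG
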